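/- arXiv:2512.08836 — 2 statements merged into one kernel-verified Lean document; each statement's English description precedes it below -/
import Mathlib

section
/- Let f : X → X be a pointwise periodic homeomorphism of a compact metric space and let A ∈ 2^X be an almost periodic point of 2^f. Then for every B in the closure (in the hyperspace 2^X) of the orbit {(2^f)^n(A) : n ∈ ℕ}, one has ⋃_{n∈ℕ} f^n(A) = ⋃_{n∈ℕ} f^n(B). -/
open TopologicalSpace Metric Set Filter

/-- The induced map on the hyperspace of nonempty compact (= closed) subsets. -/
noncomputable def hyper {X : Type*} [MetricSpace X] (f : X ≃ₜ X) :
    NonemptyCompacts X → NonemptyCompacts X :=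
  fun A => ⟨⟨f '' A, A.isCompact.image f.continuous⟩, A.nonempty.image f⟩

/-- `x` is uniformly recurrent for `g`. -/
def IsUnifRec {α : Type*} [MetricSpace α] (g : α → α) (x : α) : Prop :=
  ∀ ε > (0:ℝ), ∃ N > 0, ∀ k : ℕ, dist (g^[k * N] x) x < ε

/-- `x` is recurrent for `g` (it belongs to its own ω-limit set). -/
def IsRec {α : Type*} [MetricSpace α] (g : α → α) (x : α) : Prop :=
  ∀ ε > (0:ℝ), ∀ m : ℕ, ∃ n ≥ m, 0 < n ∧ dist (g^[n] x) x < ε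

/-- `x` is almost periodic for `g`. -/
def IsAP {α : Type*} [MetricSpace α] (g : α → α) (x : α) : Prop :=
  ∀ ε > (0:ℝ), ∃ N : ℕ, ∀ n : ℕ, ∃ i < N, dist (g^[n + i] x) x < ε

/-- `(x, y)` is an asymptotic pair for `g`. -/
def Asymp {α : Type*} [MetricSpace α] (g : α → α) (x y : α) : Prop :=
  Filter.Tendsto (fun n => dist (g^[n] x) (g^[n] y)) Filter.atTop (nhds 0)

/-- `(x, y)` is a proximal pair for `g`. -/
def Proximal {α : Type*} [MetricSpace α] (g : α → α) (x y : α) : Prop :=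
  ∀ ε > (0:ℝ), ∀ m : ℕ, ∃ n ≥ m, dist (g^[n] x) (g^[n] y) < ε

/-- The ω-limit set of `x` under `g`. -/
def omegaSet {α : Type*} [MetricSpace α] (g : α → α) (x : α) : Set α :=
  {y | ∀ ε > (0:ℝ), ∀ m : ℕ, ∃ n ≥ m, dist (g^[n] x) y < ε}

/-- `M` is a minimal set of `g`. -/
def IsMinimalFor {α : Type*} [TopologicalSpace α] (g : α → α) (M : Set α) : Prop :=
  M.Nonempty ∧ IsClosed M ∧ Set.MapsTo g M M ∧
    ∀ M' ⊆ M, M'.Nonempty → IsClosed M' → Set.MapsTo g M' M' → M' = M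

/-- `A` is internally chain transitive for `g`. -/
def ICT {α : Type*} [MetricSpace α] (g : α → α) (A : Set α) : Prop :=
  ∀ a ∈ A, ∀ b ∈ A, ∀ ε > (0:ℝ), ∃ N : ℕ, 1 ≤ N ∧ ∃ c : ℕ → α,
    c 0 = a ∧ c N = b ∧ (∀ i ≤ N, c i ∈ A) ∧ ∀ i < N, dist (g (c i)) (c (i + 1)) < ε

/-!
Both `A` and `B` lie in each other's orbit closure in the hyperspace: `B` by assumption, and `A`
because an almost periodic point lies in the orbit closure of every point of its own orbit
closure. If `B` is a limit of `fⁿ(A)`, each `x ∈ A` has iterates arbitrarily close to `B`; its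
orbit is finite, so one iterate lies in the closed set `B`, and periodicity brings it back to `x`.
Hence `A ⊆ ⋃ₙ fⁿ(B)` and symmetrically `B ⊆ ⋃ₙ fⁿ(A)`.
-/

theorem iUnion_iterate_image_subset_of_subset {α : Type*} {g : α → α} {s t : Set α}
    (h : s ⊆ ⋃ n, g^[n] '' t) : ⋃ n, g^[n] '' s ⊆ ⋃ n, g^[n] '' t := by
  refine iUnion_subset fun n => image_subset_iff.2 fun x hx => ?_
  obtain ⟨m, y, hy, rfl⟩ := mem_iUnion.1 (h hx)
  exact mem_iUnion.2 ⟨n + m, y, hy, Function.iterate_add_apply g n m y⟩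

section MetricSpace

variable {α : Type*} [MetricSpace α] {g : α → α}

theorem Function.IsPeriodicPt.mem_iUnion_iterate_image {p : ℕ} {x : α} {D : Set α}
    (hx : Function.IsPeriodicPt g p x) (hp : 0 < p) (hD : IsClosed D) (hne : D.Nonempty)
    (h : ∀ ε > 0, ∃ m, infDist (g^[m] x) D < ε) : x ∈ ⋃ n, g^[n] '' D := by
  obtain ⟨r, hr, hmin⟩ := (Finset.range p).exists_min_image
    (fun r => infDist (g^[r] x) D) ⟨0, Finset.mem_range.2 hp⟩
  have hrD : g^[r] x ∈ D := by
    refine (hD.mem_iff_infDist_zero hne).2 (by_contra fun hpos => ?_)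
    obtain ⟨m, hm⟩ := h _ (infDist_nonneg.lt_of_ne' hpos)
    rw [← hx.iterate_mod_apply m] at hm
    exact (hmin _ (Finset.mem_range.2 (Nat.mod_lt m hp))).not_gt hm
  refine mem_iUnion.2 ⟨p - r, g^[r] x, hrD, ?_⟩
  rw [← Function.iterate_add_apply, Nat.sub_add_cancel (Finset.mem_range.1 hr).le, hx.eq]

theorem IsAP.mem_closure_range_iterate (hg : Continuous g) {x y : α} (hx : IsAP g x)
    (hy : y ∈ closure (range fun n => g^[n] x)) : x ∈ closure (range fun n => g^[n] y) := by
  refine Metric.mem_closure_iff.2 fun ε hε => ?_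
  obtain ⟨N, hN⟩ := hx (ε / 2) (half_pos hε)
  -- the window condition says the whole orbit of `x`, hence its closure, lies in this closed set
  set K := ⋃ i ∈ Finset.range N, g^[i] ⁻¹' closedBall x (ε / 2)
  have hK : IsClosed K :=
    isClosed_biUnion_finset fun i _ => isClosed_closedBall.preimage (hg.iterate i)
  have horbit : range (fun n => g^[n] x) ⊆ K := by
    rintro _ ⟨n, rfl⟩
    obtain ⟨i, hi, hdist⟩ := hN n
    refine mem_iUnion₂.2 ⟨i, Finset.mem_range.2 hi, ?_⟩
    rw [mem_preimage, ← Function.iterate_add_apply, add_comm]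
    exact hdist.le
  obtain ⟨i, -, hi⟩ := mem_iUnion₂.1 (closure_minimal horbit hK hy)
  exact ⟨g^[i] y, mem_range_self i, by
    rw [dist_comm]; exact (mem_closedBall.1 hi).trans_lt (half_lt_self hε)⟩

end MetricSpace

section Hyperspace

variable {X : Type*} [MetricSpace X]

theorem coe_hyper_iterate (f : X ≃ₜ X) (A : NonemptyCompacts X) (n : ℕ) :
    ((hyper f)^[n] A : Set X) = f^[n] '' A := by
  induction n with
  | zero => simp
  | succ n ih =>
    rw [Function.iterate_succ_apply', Function.iterate_succ', image_comp, ← ih]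
    rfl

theorem continuous_hyper [CompactSpace X] (f : X ≃ₜ X) : Continuous (hyper f) :=
  (CompactSpace.uniformContinuous_of_continuous f.continuous).nonemptyCompacts_map.continuous

theorem infDist_iterate_le_dist_hyper_iterate (f : X ≃ₜ X) {A : NonemptyCompacts X} {x : X}
    (hx : x ∈ A) (B : NonemptyCompacts X) (n : ℕ) :
    infDist (f^[n] x) B ≤ dist ((hyper f)^[n] A) B := by
  refine infDist_le_hausdorffDist_of_mem ?_ (edist_ne_top ((hyper f)^[n] A) B)
  rw [coe_hyper_iterate]
  exact mem_image_of_mem _ hx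

theorem subset_iUnion_iterate_image_of_mem_closure (f : X ≃ₜ X)
    (hper : ∀ x : X, ∃ n > 0, (⇑f)^[n] x = x) {A B : NonemptyCompacts X}
    (hB : B ∈ closure (range fun n : ℕ => (hyper f)^[n] A)) :
    (A : Set X) ⊆ ⋃ n : ℕ, (⇑f)^[n] '' (B : Set X) := by
  intro x hx
  obtain ⟨p, hp, hxp⟩ := hper x
  refine Function.IsPeriodicPt.mem_iUnion_iterate_image hxp hp B.isCompact.isClosed B.nonempty
    fun ε hε => ?_
  obtain ⟨_, ⟨n, rfl⟩, hn⟩ := Metric.mem_closure_iff.1 hB ε hε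
  exact ⟨n, (infDist_iterate_le_dist_hyper_iterate f hx B n).trans_lt (dist_comm B _ ▸ hn)⟩

end Hyperspace

theorem stmt9 {X : Type*} [MetricSpace X] [CompactSpace X]
    (f : X ≃ₜ X) (hper : ∀ x : X, ∃ n > 0, (⇑f)^[n] x = x)
    (A : NonemptyCompacts X) (hAP : IsAP (hyper f) A)
    (B : NonemptyCompacts X)
    (hB : B ∈ closure (Set.range fun n : ℕ => (hyper f)^[n] A)) :
    (⋃ n : ℕ, (⇑f)^[n] '' (A : Set X)) = ⋃ n : ℕ, (⇑f)^[n] '' (B : Set X) := by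
  have hA : A ∈ closure (range fun n : ℕ => (hyper f)^[n] B) :=
    hAP.mem_closure_range_iterate (continuous_hyper f) hB
  exact (iUnion_iterate_image_subset_of_subset
      (subset_iUnion_iterate_image_of_mem_closure f hper hB)).antisymm
    (iUnion_iterate_image_subset_of_subset (subset_iUnion_iterate_image_of_mem_closure f hper hA))
end

section
/- Let f : X → X be a pointwise periodic homeomorphism of a compact metric space. Then every infinite minimal set of the induced map 2^f on the hyperspace is not totally minimal; i.e., if M ⊆ 2^X is an infinite minimal set for 2^f, then there exists n ≥ 2 such that M is not minimal for (2^f)^n. -/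
/-!
Two distinct sets `A, B ∈ M` are separated by a point `p`, say `p ∈ A \ B`. Since `p` is
periodic, say of period `N`, the elements of `M` containing `p` form a closed subset of `M`
invariant under `(2^f)^(2N)` (doubling the period makes the exponent at least `2`); it contains
`A` but not `B`, so `M` is not minimal for `(2^f)^(2N)`.
-/

open TopologicalSpace Metric Set Filter

lemma hyper_iterate_coe {X : Type*} [MetricSpace X] (f : X ≃ₜ X) (n : ℕ)
    (A : NonemptyCompacts X) : ((hyper f)^[n] A : Set X) = (⇑f)^[n] '' A := by
  induction n with
  | zero => simp
  | succ n ih =>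
    rw [Function.iterate_succ_apply', Function.iterate_succ', Set.image_comp, ← ih]
    rfl

lemma NonemptyCompacts.isClosed_setOf_mem {X : Type*} [MetricSpace X] (p : X) :
    IsClosed {C : NonemptyCompacts X | p ∈ C} := by
  have h : {C : NonemptyCompacts X | p ∈ C} =
      (fun C : NonemptyCompacts X => infDist p (C : Set X)) ⁻¹' {0} := by
    ext C
    exact C.isCompact.isClosed.mem_iff_infDist_zero C.nonempty
  rw [h]
  exact isClosed_singleton.preimage (lipschitz_infDist_set p).continuous

lemma mapsTo_hyper_iterate_setOf_mem {X : Type*} [MetricSpace X] {f : X ≃ₜ X} {n : ℕ} {p : X}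
    (hp : Function.IsPeriodicPt f n p) :
    MapsTo ((hyper f)^[n]) {C : NonemptyCompacts X | p ∈ C} {C | p ∈ C} := by
  intro C hpC
  change p ∈ ((hyper f)^[n] C : Set X)
  rw [hyper_iterate_coe]
  exact ⟨p, hpC, hp⟩

lemma IsMinimalFor.subset_of_isClosed_of_mapsTo {α : Type*} [TopologicalSpace α] {g : α → α}
    {M S : Set α} (hM : IsMinimalFor g M) (hS : IsClosed S) (hgS : MapsTo g S S)
    (hMS : (M ∩ S).Nonempty) : M ⊆ S := by
  have h := hM.2.2.2 (M ∩ S) inter_subset_left hMS (hM.2.1.inter hS) (hM.2.2.1.inter_inter hgS)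
  rw [← h]
  exact inter_subset_right

lemma Set.Nontrivial.exists_mem_notMem_setLike {S X : Type*} [SetLike S X] {M : Set S}
    (hM : M.Nontrivial) : ∃ A ∈ M, ∃ B ∈ M, ∃ p ∈ A, p ∉ B := by
  obtain ⟨C₁, hC₁, C₂, hC₂, hne⟩ := hM
  by_cases h : (C₁ : Set X) ⊆ C₂
  · have h' : ¬ (C₂ : Set X) ⊆ C₁ := fun h' => hne (SetLike.coe_injective (h.antisymm h'))
    obtain ⟨p, hp₂, hp₁⟩ := not_subset.1 h'
    exact ⟨C₂, hC₂, C₁, hC₁, p, hp₂, hp₁⟩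
  · obtain ⟨p, hp₁, hp₂⟩ := not_subset.1 h
    exact ⟨C₁, hC₁, C₂, hC₂, p, hp₁, hp₂⟩

theorem stmt10_general {X : Type*} [MetricSpace X]
    (f : X ≃ₜ X) (hper : ∀ x : X, ∃ n > 0, (⇑f)^[n] x = x)
    (M : Set (NonemptyCompacts X))
    (hinf : M.Infinite) :
    ∃ n ≥ 2, ¬ IsMinimalFor ((hyper f)^[n]) M := by
  obtain ⟨A, hA, B, hB, p, hpA, hpB⟩ := hinf.nontrivial.exists_mem_notMem_setLike
  obtain ⟨N, hN, hp⟩ := hper p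
  refine ⟨2 * N, by omega, fun hmin => hpB ?_⟩
  have hpM : M ⊆ {C | p ∈ C} :=
    hmin.subset_of_isClosed_of_mapsTo (NonemptyCompacts.isClosed_setOf_mem p)
      (mapsTo_hyper_iterate_setOf_mem (Function.IsPeriodicPt.const_mul hp 2)) ⟨A, hA, hpA⟩
  exact hpM hB

theorem stmt10 {X : Type*} [MetricSpace X] [CompactSpace X]
    (f : X ≃ₜ X) (hper : ∀ x : X, ∃ n > 0, (⇑f)^[n] x = x)
    (M : Set (NonemptyCompacts X)) (hM : IsMinimalFor (hyper f) M)
    (hinf : M.Infinite) :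
    ∃ n ≥ 2, ¬ IsMinimalFor ((hyper f)^[n]) M :=
  stmt10_general f hper M hinf
end
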